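/- arXiv:2601.17825 — 4 statements merged into one kernel-verified Lean document; each statement's English description precedes it below -/
import Mathlib

section
/- Let λ > 0 and D_min > 0 be real numbers, let a, b ∈ ℝ with b ≠ 0, and let N ≥ 2 be an integer. Then there exist real numbers x_1 < x_2 < ⋯ < x_N with x_{n} − x_{n−1} ≥ D_min for all n = 2,…,N such that ∑_{n=1}^{N} exp( i·(2π/λ)·(a·x_n + b·x_n²) ) = 0. -/
/-!
Write `φ(x) = (2π/λ)(a x + b x²)`. Since `b ≠ 0`, `φ` is a genuine quadratic, so `|φ| → ∞`, and
by the intermediate value theorem `φ` takes, beyond any point, a value congruent to any prescribed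
phase modulo `2π`. Placing the antennas one after another, each at least `D_min` beyond the
previous one, with `φ(x_n) ≡ 2πn/N`, turns the sum into the sum of all `N`-th roots of unity,
which vanishes for `N ≥ 2`.
-/

open Complex Real Filter Set

theorem AddCommGroup.exists_mem_Icc_modEq {α : Type*} [AddCommGroup α] [LinearOrder α]
    [IsOrderedAddMonoid α] [Archimedean α] {p m M : α} (hp : 0 < p) (h : m + p ≤ M) (b : α) :
    ∃ t ∈ Icc m M, t ≡ b [PMOD p] := by
  obtain ⟨hm, hlt⟩ := toIcoMod_mem_Ico hp m b
  exact ⟨toIcoMod hp m b, ⟨hm, hlt.le.trans h⟩,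
    (toIcoMod_inj hp).1 (toIcoMod_toIcoMod hp m m b)⟩

theorem Continuous.exists_ge_modEq_of_tendsto_abs {f : ℝ → ℝ} (hf : Continuous f)
    (hlim : Tendsto (fun x => |f x|) atTop atTop) {p : ℝ} (hp : 0 < p) (s θ : ℝ) :
    ∃ x, s ≤ x ∧ f x ≡ θ [PMOD p] := by
  obtain ⟨Z, hZ, hsZ⟩ :=
    ((hlim.eventually_ge_atTop (|f s| + p)).and (eventually_ge_atTop s)).exists
  have hwide : min (f s) (f Z) + p ≤ max (f s) (f Z) := by
    have := abs_sub_abs_le_abs_sub (f Z) (f s)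
    rw [abs_sub_comm] at this
    linarith [max_sub_min_eq_abs' (f s) (f Z)]
  obtain ⟨t, ht, htθ⟩ := AddCommGroup.exists_mem_Icc_modEq hp hwide θ
  obtain ⟨x, hx, rfl⟩ := intermediate_value_uIcc (a := s) (b := Z) hf.continuousOn ht
  rw [uIcc_of_le hsZ] at hx
  exact ⟨x, hx.1, htθ⟩

theorem exists_seq_add_le_of_forall_exists_ge {α : Type*} [LE α] [Add α] [Nonempty α]
    {P : ℕ → α → Prop} (h : ∀ n s, ∃ x, s ≤ x ∧ P n x) (d : α) :
    ∃ x : ℕ → α, (∀ n, P n (x n)) ∧ ∀ n, x n + d ≤ x (n + 1) := by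
  choose F hF_ge hF using h
  let x : ℕ → α := fun n =>
    Nat.rec (F 0 (Classical.arbitrary α)) (fun k y => F (k + 1) (y + d)) n
  refine ⟨x, fun n => ?_, fun n => hF_ge (n + 1) (x n + d)⟩
  cases n <;> apply hF

theorem Complex.exp_I_mul_eq_of_modEq {r s : ℝ} (h : r ≡ s [PMOD (2 * π)]) :
    exp (I * r) = exp (I * s) := by
  simpa only [Circle.coe_exp, mul_comm I] using
    congrArg ((↑) : Circle → ℂ) (Circle.exp_inj.2 h)

theorem sum_exp_I_mul_two_pi_mul_div_eq_zero {N : ℕ} (hN : 1 < N) :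
    ∑ n : Fin N, exp (I * ((2 * π * n / N : ℝ) : ℂ)) = 0 := by
  have hζ := isPrimitiveRoot_exp N (by omega)
  calc ∑ n : Fin N, exp (I * ((2 * π * n / N : ℝ) : ℂ))
      = ∑ n ∈ Finset.range N, exp (2 * π * I / N) ^ n := by
        rw [← Fin.sum_univ_eq_sum_range]
        refine Finset.sum_congr rfl fun n _ => ?_
        rw [← Complex.exp_nat_mul]
        push_cast
        ring_nf
    _ = 0 := hζ.geom_sum_eq_zero hN

theorem tendsto_abs_quadratic_atTop {a : ℝ} (ha : a ≠ 0) (b c : ℝ) :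
    Tendsto (fun x => |a * x ^ 2 + b * x + c|) atTop atTop := by
  open Polynomial in
  refine (abs_tendsto_atTop (C a * X ^ 2 + C b * X + C c) ?_).congr fun x => ?_
  · rw [degree_quadratic ha]; norm_num
  · simp

/-- Proposition 1: beam nulling with K = 1 undesired user under the ALMR assumption.
For any `λ > 0`, `D_min > 0`, real `a, b` with `b ≠ 0`, and integer `N ≥ 2`, there exist
antenna positions `x_1 < x_2 < ⋯ < x_N` with consecutive gaps at least `D_min` such that
`∑_{n=1}^N exp(i (2π/λ)(a x_n + b x_n²)) = 0`. -/
theorem beam_nulling_single_user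
    (lam Dmin : ℝ) (hlam : 0 < lam) (hDmin : 0 < Dmin)
    (a b : ℝ) (hb : b ≠ 0) (N : ℕ) (hN : 2 ≤ N) :
    ∃ x : Fin N → ℝ,
      StrictMono x ∧
      (∀ i : Fin N, ∀ h : i.val + 1 < N, x ⟨i.val + 1, h⟩ - x i ≥ Dmin) ∧
      ∑ n : Fin N,
        Complex.exp (Complex.I * ((2 * Real.pi / lam) * (a * x n + b * (x n) ^ 2) : ℝ)) = 0 := by
  set c := 2 * π / lam
  have hcb : c * b ≠ 0 := mul_ne_zero (by positivity) hb
  have hφ_cont : Continuous fun x : ℝ => c * (a * x + b * x ^ 2) := by fun_prop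
  have hφ_lim : Tendsto (fun x : ℝ => |c * (a * x + b * x ^ 2)|) atTop atTop :=
    (tendsto_abs_quadratic_atTop hcb (c * a) 0).congr fun x => by ring_nf
  have hphase (n : ℕ) (s : ℝ) :
      ∃ x, s ≤ x ∧ c * (a * x + b * x ^ 2) ≡ 2 * π * n / N [PMOD (2 * π)] :=
    hφ_cont.exists_ge_modEq_of_tendsto_abs hφ_lim two_pi_pos s _
  obtain ⟨x, hx_phase, hx_gap⟩ := exists_seq_add_le_of_forall_exists_ge hphase Dmin
  have hx_mono : StrictMono x := strictMono_nat_of_lt_succ fun n => by linarith [hx_gap n]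
  refine ⟨fun i => x i, hx_mono.comp Fin.val_strictMono, fun i _ => by linarith [hx_gap i], ?_⟩
  calc ∑ n : Fin N, exp (I * ((c * (a * x n + b * x n ^ 2) : ℝ) : ℂ))
      = ∑ n : Fin N, exp (I * ((2 * π * n / N : ℝ) : ℂ)) :=
        Finset.sum_congr rfl fun n _ => exp_I_mul_eq_of_modEq (hx_phase n)
    _ = 0 := sum_exp_I_mul_two_pi_mul_div_eq_zero hN
end

section
/- Let λ > 0, let K_1 ≥ 0 and N_1 ≥ 1 be integers, and let b_1,…,b_{K_1+1} ∈ ℝ with b_{K_1+1} ≠ 0. Suppose x_1,…,x_{N_1} ∈ ℝ satisfy ∑_{n=1}^{N_1} exp( i·(2π/λ)·b_k·x_n² ) = 0 for every k = 1,…,K_1. Then for every integer N_2 ≥ 2 there exist real numbers y_1,…,y_{N_1·N_2} such that ∑_{n=1}^{N_1·N_2} exp( i·(2π/λ)·b_k·y_n² ) = 0 for every k = 1,…,K_1+1. -/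
open Complex Real Finset

/-!
Place the new positions on `N₂` shifted copies of the old ones, `y² = x² + j d` for
`j < N₂`. The phase then factors as `exp(i c x²) · exp(i c d)^j`, so every sum splits into the
old sum times a geometric sum in `exp(i c d)`. The old sums vanish for the first `K₁` users, and
for the last user the choice `d = λ / (N₂ |b_{K₁+1}|)` makes `exp(i c d)` a primitive `N₂`-th root
of unity, whose geometric sum over a full period vanishes.
-/

/-- The paper's `y_{n₁+(n₂−1)N₁} = √(x_{n₁}² + (n₂−1) d)`, with the pairs `(n₁, n₂ − 1)`
enumerated by `finProdFinEquiv` instead. -/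
noncomputable def extendPositions {N1 : ℕ} (x : Fin N1 → ℝ) (N2 : ℕ) (d : ℝ) :
    Fin (N1 * N2) → ℝ :=
  fun n => √(x (finProdFinEquiv.symm n).1 ^ 2 + (finProdFinEquiv.symm n).2 * d)

theorem sum_exp_extendPositions {N1 : ℕ} (x : Fin N1 → ℝ) (N2 : ℕ) {d : ℝ} (hd : 0 ≤ d)
    (c : ℝ) :
    ∑ n, exp (I * (c * extendPositions x N2 d n ^ 2 : ℝ)) =
      (∑ n, exp (I * (c * x n ^ 2 : ℝ))) * ∑ j ∈ range N2, exp (I * (c * d : ℝ)) ^ j := by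
  rw [← Fin.sum_univ_eq_sum_range, sum_mul_sum, ← Fintype.sum_prod_type',
    ← finProdFinEquiv.sum_comp]
  refine Fintype.sum_congr _ _ fun p => ?_
  rw [extendPositions, Equiv.symm_apply_apply, sq_sqrt (by positivity), ← Complex.exp_nat_mul,
    ← Complex.exp_add]
  push_cast
  ring_nf

theorem isPrimitiveRoot_exp_mul_div_abs {N : ℕ} (hN : N ≠ 0) {B : ℝ} (hB : B ≠ 0) :
    IsPrimitiveRoot (exp (I * (2 * π * B / (N * |B|) : ℝ))) N := by
  have hζ := isPrimitiveRoot_exp N hN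
  rcases hB.lt_or_gt with hneg | hpos
  · have hphase : 2 * π * B / (N * |B|) = -(2 * π / N) := by
      rw [abs_of_neg hneg]
      field_simp
    have hζ_inv : exp (I * (2 * π * B / (N * |B|) : ℝ)) = (exp (2 * π * I / N))⁻¹ := by
      rw [hphase, ← Complex.exp_neg]
      push_cast
      ring_nf
    exact hζ_inv ▸ hζ.inv
  · have hphase : 2 * π * B / (N * |B|) = 2 * π / N := by
      rw [abs_of_pos hpos]
      field_simp
    have hζ_eq : exp (I * (2 * π * B / (N * |B|) : ℝ)) = exp (2 * π * I / N) := by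
      rw [hphase]
      push_cast
      ring_nf
    exact hζ_eq ▸ hζ

theorem nulling_extension_general
    (lam : ℝ) (hlam : 0 < lam) (K1 N1 : ℕ)
    (b : Fin (K1 + 1) → ℝ) (hb : b (Fin.last K1) ≠ 0)
    (x : Fin N1 → ℝ)
    (hx : ∀ k : Fin K1,
      ∑ n : Fin N1,
        Complex.exp (Complex.I * ((2 * Real.pi / lam) * b k.castSucc * (x n) ^ 2 : ℝ)) = 0) :
    ∀ N2 : ℕ, 2 ≤ N2 →
      ∃ y : Fin (N1 * N2) → ℝ,
        ∀ k : Fin (K1 + 1),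
          ∑ n : Fin (N1 * N2),
            Complex.exp (Complex.I * ((2 * Real.pi / lam) * b k * (y n) ^ 2 : ℝ)) = 0 := by
  intro N2 hN2
  have hd : 0 ≤ lam / (N2 * |b (Fin.last K1)|) := by positivity
  refine ⟨extendPositions x N2 (lam / (N2 * |b (Fin.last K1)|)), fun k => ?_⟩
  rw [sum_exp_extendPositions x N2 hd]
  cases k using Fin.lastCases with
  | last =>
    have hphase : 2 * π / lam * b (Fin.last K1) * (lam / (N2 * |b (Fin.last K1)|)) =
        2 * π * b (Fin.last K1) / (N2 * |b (Fin.last K1)|) := by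
      field_simp
    rw [hphase, (isPrimitiveRoot_exp_mul_div_abs (by omega) hb).geom_sum_eq_zero hN2, mul_zero]
  | cast j => rw [hx j, zero_mul]

/-- Lemma 3: extension of a nulling antenna position vector. If `x_1,…,x_{N₁}` null the
exponential sums `∑_n exp(i (2π/λ) b_k x_n²)` for `k = 1,…,K₁`, and `b_{K₁+1} ≠ 0`,
then for any `N₂ ≥ 2` there exist `y_1,…,y_{N₁N₂}` nulling the sums for `k = 1,…,K₁+1`. -/
theorem nulling_extension
    (lam : ℝ) (hlam : 0 < lam) (K1 N1 : ℕ) (hN1 : 1 ≤ N1)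
    (b : Fin (K1 + 1) → ℝ) (hb : b (Fin.last K1) ≠ 0)
    (x : Fin N1 → ℝ)
    (hx : ∀ k : Fin K1,
      ∑ n : Fin N1,
        Complex.exp (Complex.I * ((2 * Real.pi / lam) * b k.castSucc * (x n) ^ 2 : ℝ)) = 0) :
    ∀ N2 : ℕ, 2 ≤ N2 →
      ∃ y : Fin (N1 * N2) → ℝ,
        ∀ k : Fin (K1 + 1),
          ∑ n : Fin (N1 * N2),
            Complex.exp (Complex.I * ((2 * Real.pi / lam) * b k * (y n) ^ 2 : ℝ)) = 0 :=
  nulling_extension_general lam hlam K1 N1 b hb x hx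
end

section
/- Let λ > 0, let K ≥ 1 be an integer, and let b_1,…,b_K ∈ ℝ with b_k ≠ 0 for every k. Suppose N = g_1·g_2·⋯·g_K where each g_i ≥ 2 is an integer. Then there exist real numbers x_1,…,x_N such that ∑_{n=1}^{N} exp( i·(2π/λ)·b_k·x_n² ) = 0 for every k = 1,…,K. -/
/-!
Index the `N = ∏ gᵢ` antennas by `v ∈ ∏ᵢ Fin gᵢ` and place them so that
`x_v² = C + ∑ᵢ cᵢ vᵢ` with `cᵢ = λ / (gᵢ bᵢ)`, the constant `C` making the right side nonnegative.
For user `k` the phase is then affine in `v`, so the array factor splits into a product over `i`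
of one-dimensional geometric sums; the `k`-th factor is the sum of all `g_k`-th roots of unity,
which vanishes.
-/

open Complex Real

theorem sum_fin_exp_I_mul_eq_zero {m : ℕ} (hm : 2 ≤ m) {θ : ℝ} (hθ : θ * m = 2 * π) :
    ∑ a : Fin m, exp (I * (θ * a : ℝ)) = 0 := by
  have hζ : IsPrimitiveRoot (exp (2 * π * I / m)) m := isPrimitiveRoot_exp m (by omega)
  have hpow (a : ℕ) : exp (I * (θ * a : ℝ)) = exp (2 * π * I / m) ^ a := by
    have hm0 : (m : ℂ) ≠ 0 := by exact_mod_cast (show m ≠ 0 by omega)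
    have hθ' : (θ : ℂ) = 2 * π / m := by
      rw [eq_div_iff hm0]
      exact_mod_cast hθ
    rw [← Complex.exp_nat_mul]
    push_cast
    rw [hθ']
    ring_nf
  rw [Fin.sum_univ_eq_sum_range (fun a => exp (I * (θ * a : ℝ))),
    Finset.sum_congr rfl fun a _ => hpow a]
  exact hζ.geom_sum_eq_zero (by omega)

theorem sum_pi_exp_I_mul_affine_eq_zero {ι : Type*} [Fintype ι] [DecidableEq ι]
    {g : ι → ℕ} (α : ι → ℝ) (C : ℝ) {k : ι} (hk : 2 ≤ g k) (hαk : α k * g k = 2 * π) :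
    ∑ v : (i : ι) → Fin (g i), exp (I * (C + ∑ i, α i * v i : ℝ)) = 0 := by
  have hsplit (v : (i : ι) → Fin (g i)) :
      exp (I * (C + ∑ i, α i * v i : ℝ)) = exp (I * C) * ∏ i, exp (I * (α i * v i : ℝ)) := by
    push_cast
    rw [mul_add, Complex.exp_add, Finset.mul_sum, Complex.exp_sum]
  simp_rw [hsplit]
  rw [← Finset.mul_sum, ← Fintype.prod_sum fun i (a : Fin (g i)) => exp (I * (α i * a : ℝ))]
  exact mul_eq_zero_of_right _ <|
    Finset.prod_eq_zero (Finset.mem_univ k) (sum_fin_exp_I_mul_eq_zero hk hαk)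

theorem exists_forall_add_sum_mul_nonneg {ι : Type*} [Fintype ι] (g : ι → ℕ) (c : ι → ℝ) :
    ∃ C : ℝ, ∀ v : (i : ι) → Fin (g i), 0 ≤ C + ∑ i, c i * v i := by
  refine ⟨∑ i, |c i| * g i, fun v => ?_⟩
  rw [← Finset.sum_add_distrib]
  refine Finset.sum_nonneg fun i _ => ?_
  have hv : |c i * v i| ≤ |c i| * g i := by
    rw [abs_mul, Nat.abs_cast]
    exact mul_le_mul_of_nonneg_left (by exact_mod_cast (v i).isLt.le) (abs_nonneg _)
  linarith [neg_abs_le (c i * v i)]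

theorem simultaneous_nulling_construction_general
    (lam : ℝ) (hlam : 0 < lam) (K : ℕ)
    (b : Fin K → ℝ) (hb : ∀ k, b k ≠ 0)
    (g : Fin K → ℕ) (hg : ∀ i, 2 ≤ g i)
    (N : ℕ) (hN : N = ∏ i, g i) :
    ∃ x : Fin N → ℝ,
      ∀ k : Fin K,
        ∑ n : Fin N,
          Complex.exp (Complex.I * ((2 * Real.pi / lam) * b k * (x n) ^ 2 : ℝ)) = 0 := by
  let c : Fin K → ℝ := fun i => lam / (g i * b i)
  obtain ⟨C, hC⟩ := exists_forall_add_sum_mul_nonneg g c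
  let e : Fin N ≃ ((i : Fin K) → Fin (g i)) := Fintype.equivOfCardEq (by simp [hN])
  refine ⟨fun n => √(C + ∑ i, c i * e n i), fun k => ?_⟩
  have hck : (2 * π / lam * b k * c k) * g k = 2 * π := by
    have : (g k : ℝ) ≠ 0 := by have := hg k; positivity
    simp only [c]
    field_simp [hb k, hlam.ne']
  rw [← Equiv.sum_comp e.symm, ← sum_pi_exp_I_mul_affine_eq_zero
    (fun i => 2 * π / lam * b k * c i) (2 * π / lam * b k * C) (hg k) hck]
  refine Finset.sum_congr rfl fun v _ => ?_
  rw [Real.sq_sqrt (hC _), e.apply_symm_apply, mul_add,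
    Finset.mul_sum Finset.univ (fun i => c i * (v i : ℝ))]
  simp only [mul_assoc]

/-- Algorithm 1 construction: if `N = g₁ ⋯ g_K` with each `g_i ≥ 2`, and `b_1,…,b_K` are
nonzero reals, then there exist `x_1,…,x_N` with
`∑_{n=1}^N exp(i (2π/λ) b_k x_n²) = 0` for every `k = 1,…,K`. -/
theorem simultaneous_nulling_construction
    (lam : ℝ) (hlam : 0 < lam) (K : ℕ) (hK : 1 ≤ K)
    (b : Fin K → ℝ) (hb : ∀ k, b k ≠ 0)
    (g : Fin K → ℕ) (hg : ∀ i, 2 ≤ g i)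
    (N : ℕ) (hN : N = ∏ i, g i) :
    ∃ x : Fin N → ℝ,
      ∀ k : Fin K,
        ∑ n : Fin N,
          Complex.exp (Complex.I * ((2 * Real.pi / lam) * b k * (x n) ^ 2 : ℝ)) = 0 :=
  simultaneous_nulling_construction_general lam hlam K b hb g hg N hN
end

section
/- Let λ > 0, D_min > 0, and let N ≥ 1 and K ≥ 1 be integers. Let â_1,…,â_K and b̂_1,…,b̂_K be rational numbers. Then there exists a real number d ≥ D_min such that, with antenna positions x_n = (n−1)·d for n = 1,…,N, one has (1/N)·| ∑_{n=1}^{N} exp( i·2π·( (n−1)·â_k·d + (n−1)²·(b̂_k·d)² ) ) |² = N for every k = 1,…,K. -/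
open Complex Real

/-!
Take the spacing `d` to be a natural number divisible by the denominators of all `â_k` and
`b̂_k`. Then every phase `n â_k d + n² (b̂_k d)²` is an integer, so all `N` terms of the array
factor equal `1` and the gain is `N² / N = N`.
-/

lemma exists_nat_ge_forall_dvd {ι : Type*} [Fintype ι] (f : ι → ℕ) (hf : ∀ i, f i ≠ 0)
    (x : ℝ) : ∃ c : ℕ, x ≤ c ∧ ∀ i, f i ∣ c := by
  classical
  have hprod : 1 ≤ ∏ i, f i :=
    Nat.one_le_iff_ne_zero.mpr (Finset.prod_ne_zero_iff.mpr fun i _ => hf i)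
  refine ⟨⌈x⌉₊ * ∏ i, f i, ?_, fun i => ?_⟩
  · calc x ≤ ⌈x⌉₊ := Nat.le_ceil x
      _ ≤ (⌈x⌉₊ * ∏ i, f i : ℕ) := by exact_mod_cast Nat.le_mul_of_pos_right _ hprod
  · exact (Finset.dvd_prod_of_mem f (Finset.mem_univ i)).mul_left _

lemma Rat.exists_int_eq_mul_natCast_of_den_dvd (q : ℚ) {c : ℕ} (h : q.den ∣ c) :
    ∃ z : ℤ, (q : ℝ) * c = z := by
  obtain ⟨e, rfl⟩ := h
  refine ⟨q.num * e, ?_⟩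
  have hq : (q * q.den : ℝ) = q.num := by exact_mod_cast q.mul_den_eq_num
  push_cast
  rw [← hq, mul_assoc]

lemma sum_exp_two_pi_int_mul_I (s : Finset ℕ) (φ : ℕ → ℝ)
    (hφ : ∀ n, ∃ z : ℤ, φ n = z) :
    ∑ n ∈ s, Complex.exp (Complex.I * ((2 * Real.pi) * φ n : ℝ)) = s.card := by
  have hterm : ∀ n ∈ s, Complex.exp (Complex.I * ((2 * Real.pi) * φ n : ℝ)) = 1 := by
    intro n _
    obtain ⟨z, hz⟩ := hφ n
    rw [hz, ← Complex.exp_int_mul_two_pi_mul_I z]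
    push_cast
    ring_nf
  rw [Finset.sum_congr rfl hterm, Finset.sum_const, nsmul_one]

lemma beam_gain_eq_of_int_phases (N : ℕ) (φ : ℕ → ℝ) (hφ : ∀ n, ∃ z : ℤ, φ n = z) :
    (1 / (N : ℝ)) *
        ‖∑ n ∈ Finset.range N, Complex.exp (Complex.I * ((2 * Real.pi) * φ n : ℝ))‖ ^ 2 =
      N := by
  rw [sum_exp_two_pi_int_mul_I _ φ hφ, Finset.card_range, Complex.norm_natCast]
  rcases Nat.eq_zero_or_pos N with rfl | hN
  · simp
  · field_simp

theorem multi_beam_full_gain_general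
    (Dmin : ℝ)
    (N K : ℕ)
    (ahat bhat : Fin K → ℚ) :
    ∃ d : ℝ, Dmin ≤ d ∧
      ∀ k : Fin K,
        (1 / (N : ℝ)) *
            ‖∑ n ∈ Finset.range N,
              Complex.exp (Complex.I *
                ((2 * Real.pi) *
                  ((n : ℝ) * ((ahat k : ℝ) * d) +
                    (n : ℝ) ^ 2 * ((bhat k : ℝ) * d) ^ 2) : ℝ))‖ ^ 2 =
          (N : ℝ) := by
  obtain ⟨c, hDmin, hdvd⟩ := exists_nat_ge_forall_dvd (fun k => (ahat k).den * (bhat k).den)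
    (fun k => Nat.mul_ne_zero (ahat k).den_nz (bhat k).den_nz) Dmin
  refine ⟨c, hDmin, fun k => beam_gain_eq_of_int_phases N _ fun n => ?_⟩
  obtain ⟨za, hza⟩ :=
    (ahat k).exists_int_eq_mul_natCast_of_den_dvd (dvd_of_mul_right_dvd (hdvd k))
  obtain ⟨zb, hzb⟩ :=
    (bhat k).exists_int_eq_mul_natCast_of_den_dvd (dvd_of_mul_left_dvd (hdvd k))
  exact ⟨n * za + n ^ 2 * zb ^ 2, by rw [hza, hzb]; push_cast; ring⟩

/-- Theorem 1 (multi-beam forming / grating lobes): if all `â_k` and `b̂_k` are rational,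
then there exists a uniform antenna spacing `d ≥ D_min` such that, with positions
`x_n = (n-1)d`, the beam gain
`(1/N) |∑_{n=1}^N exp(i 2π((n-1) â_k d + (n-1)² (b̂_k d)²))|²` equals the full gain `N`
simultaneously for every `k = 1,…,K`. -/
theorem multi_beam_full_gain
    (lam Dmin : ℝ) (hlam : 0 < lam) (hDmin : 0 < Dmin)
    (N K : ℕ) (hN : 1 ≤ N) (hK : 1 ≤ K)
    (ahat bhat : Fin K → ℚ) :
    ∃ d : ℝ, Dmin ≤ d ∧
      ∀ k : Fin K,
        (1 / (N : ℝ)) *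
            ‖∑ n ∈ Finset.range N,
              Complex.exp (Complex.I *
                ((2 * Real.pi) *
                  ((n : ℝ) * ((ahat k : ℝ) * d) +
                    (n : ℝ) ^ 2 * ((bhat k : ℝ) * d) ^ 2) : ℝ))‖ ^ 2 =
          (N : ℝ) :=
  multi_beam_full_gain_general Dmin N K ahat bhat
end
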